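/- arXiv:1002.2831 — 4 statements merged into one kernel-verified Lean document; each statement's English description precedes it below -/
import Mathlib

section
/- Let 0 < α ≤ 1 and β > 0 with α + β > 1, and fix δ > 0. Define K(z) = Σ_{k=1}^∞ 1/(k^α (z + k^β)) and h(z) = ∫₁^∞ dx/(x^α (z + x^β)). Then there exists a constant C such that for all z with |arg z| < π − δ and |z| ≥ 1, |K(z) − h(z)| ≤ C/|z|. -/
open Complex Real MeasureTheory Set Filter

/-!
Compare each summand `f k`, `f x = 1 / (x^α (z + x^β))`, with the integral of `f` over
`(k, k + 1]`. In the sector `|arg z| ≤ π - δ` one has `|z + t| ≥ sin (δ / 2) (|z| + t)` for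
`t ≥ 0`, so `|z + t|` is at least a fixed multiple of both `|z|` and `t`. Writing
`f k - f x = (x^α - k^α) / (k^α x^α (z + k^β)) + (x^β - k^β) / (x^α (z + k^β) (z + x^β))` and
using the mean value theorem for `x^α - k^α` and `x^β - k^β` gives
`|f k - f x| = O(k^(-1-α) / |z|)` on `[k, k + 1]`, which is summable since `α > 0`.
-/

lemma sin_half_mul_norm_add_le_norm_add_ofReal {z : ℂ} {d t : ℝ} (hd : 0 ≤ d)
    (harg : |z.arg| ≤ π - d) (ht : 0 ≤ t) :
    Real.sin (d / 2) * (‖z‖ + t) ≤ ‖z + t‖ := by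
  have hre : -(‖z‖ * Real.cos d) ≤ z.re := by
    have hcos : Real.cos (π - d) ≤ Real.cos |z.arg| :=
      cos_le_cos_of_nonneg_of_le_pi (abs_nonneg _) (by linarith) harg
    rw [Real.cos_pi_sub, Real.cos_abs] at hcos
    rw [← norm_mul_cos_arg z]
    nlinarith [norm_nonneg z]
  have hnorm_sq : ‖z + t‖ ^ 2 = ‖z‖ ^ 2 + 2 * t * z.re + t ^ 2 := by
    simp only [← normSq_eq_norm_sq, normSq_apply, add_re, add_im, ofReal_re, ofReal_im]
    ring
  have hsin_sq : Real.sin (d / 2) ^ 2 = (1 - Real.cos d) / 2 := by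
    rw [Real.sin_sq_eq_half_sub, mul_div_cancel₀ _ two_ne_zero]; ring
  refine (le_abs_self _).trans (abs_le_of_sq_le_sq ?_ (norm_nonneg _))
  rw [mul_pow, hsin_sq, hnorm_sq]
  nlinarith [mul_nonneg (neg_le_iff_add_nonneg.mp (Real.neg_one_le_cos d)) (sq_nonneg (‖z‖ - t)),
    mul_le_mul_of_nonneg_left hre ht]

lemma rpow_sub_one_le_two_rpow_mul {p k t : ℝ} (hp : 0 ≤ p) (hk : 0 < k) (hkt : k ≤ t)
    (ht : t ≤ 2 * k) : t ^ (p - 1) ≤ 2 ^ p * k ^ (p - 1) := by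
  rcases le_total p 1 with hp1 | hp1
  · calc t ^ (p - 1) ≤ k ^ (p - 1) := rpow_le_rpow_of_nonpos hk hkt (by linarith)
      _ ≤ 2 ^ p * k ^ (p - 1) :=
        le_mul_of_one_le_left (by positivity) (one_le_rpow one_le_two hp)
  · calc t ^ (p - 1) ≤ (2 * k) ^ (p - 1) := rpow_le_rpow (by linarith) ht (by linarith)
      _ = 2 ^ (p - 1) * k ^ (p - 1) := mul_rpow zero_le_two hk.le
      _ ≤ 2 ^ p * k ^ (p - 1) := by
        gcongr
        · exact one_le_two
        · linarith

lemma rpow_sub_rpow_le_of_le_add_one {p k x : ℝ} (hp : 0 ≤ p) (hk : 1 ≤ k) (hkx : k ≤ x)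
    (hx : x ≤ k + 1) : x ^ p - k ^ p ≤ p * 2 ^ p * k ^ (p - 1) := by
  have hk0 : 0 < k := zero_lt_one.trans_le hk
  have hderiv : ∀ t ∈ interior (Icc k (k + 1)),
      deriv (fun x : ℝ ↦ x ^ p) t ≤ p * 2 ^ p * k ^ (p - 1) := by
    intro t ht
    rw [interior_Icc] at ht
    rw [Real.deriv_rpow_const, mul_assoc]
    exact mul_le_mul_of_nonneg_left
      (rpow_sub_one_le_two_rpow_mul hp hk0 ht.1.le (by linarith [ht.2])) hp
  have hcont : ContinuousOn (fun x : ℝ ↦ x ^ p) (Icc k (k + 1)) :=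
    fun t ht ↦ (continuousAt_rpow_const t p (Or.inl (hk0.trans_le ht.1).ne')).continuousWithinAt
  have hdiff : DifferentiableOn ℝ (fun x : ℝ ↦ x ^ p) (interior (Icc k (k + 1))) := by
    rw [interior_Icc]
    exact fun t ht ↦
      (differentiableAt_rpow_const_of_ne p (hk0.trans ht.1).ne').differentiableWithinAt
  refine ((convex_Icc k (k + 1)).image_sub_le_mul_sub_of_deriv_le hcont hdiff hderiv k
    (left_mem_Icc.mpr (by linarith)) x ⟨hkx, hx⟩ hkx).trans ?_
  exact mul_le_of_le_one_right (by positivity) (by linarith)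

lemma iUnion_Ioc_natCast_add_one : ⋃ n : ℕ, Ioc ((n : ℝ) + 1) (n + 2) = Ioi 1 := by
  ext x
  simp only [mem_iUnion, mem_Ioc, mem_Ioi]
  constructor
  · rintro ⟨n, hn, -⟩
    linarith [n.cast_nonneg (α := ℝ)]
  · intro hx
    have h2 : 2 ≤ ⌈x⌉₊ := Nat.lt_ceil.mpr (by norm_num; linarith)
    refine ⟨⌈x⌉₊ - 2, ?_, ?_⟩
    · push_cast [Nat.cast_sub h2]
      linarith [Nat.ceil_lt_add_one (zero_le_one.trans hx.le)]
    · push_cast [Nat.cast_sub h2]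
      linarith [Nat.le_ceil x]

lemma pairwise_disjoint_Ioc_natCast_add_one :
    Pairwise (Function.onFun Disjoint fun n : ℕ ↦ Ioc ((n : ℝ) + 1) (n + 2)) := by
  have := (pairwise_disjoint_Ioc_add_intCast (1 : ℝ)).comp_of_injective Nat.cast_injective
  convert this using 3 with n
  simp only [Int.cast_natCast]
  congr 1 <;> ring

lemma norm_tsum_sub_integral_Ioi_le {E : Type*} [NormedAddCommGroup E] [NormedSpace ℝ E]
    [CompleteSpace E] {f : ℝ → E} {b : ℕ → ℝ} (hf : IntegrableOn f (Ioi 1)) (hb : Summable b)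
    (hfb : ∀ n : ℕ, ∀ x ∈ Ioc ((n : ℝ) + 1) (n + 2), ‖f (n + 1) - f x‖ ≤ b n) :
    ‖∑' n : ℕ, f (n + 1) - ∫ x in Ioi 1, f x‖ ≤ ∑' n, b n := by
  set I : ℕ → E := fun n ↦ ∫ x in Ioc ((n : ℝ) + 1) (n + 2), f x
  have hI : HasSum I (∫ x in Ioi 1, f x) := by
    rw [← iUnion_Ioc_natCast_add_one] at hf ⊢
    exact hasSum_integral_iUnion (fun _ ↦ measurableSet_Ioc)
      pairwise_disjoint_Ioc_natCast_add_one hf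
  have hvol : ∀ n : ℕ, volume.real (Ioc ((n : ℝ) + 1) (n + 2)) = 1 := fun n ↦ by
    rw [Real.volume_real_Ioc]; norm_num
  have hterm : ∀ n : ℕ, ‖f (n + 1) - I n‖ ≤ b n := fun n ↦ by
    have hsub : Ioc ((n : ℝ) + 1) (n + 2) ⊆ Ioi 1 := fun x hx ↦
      lt_of_le_of_lt (by linarith [n.cast_nonneg (α := ℝ)]) hx.1
    have hconst : f (n + 1) = ∫ _ in Ioc ((n : ℝ) + 1) (n + 2), f (n + 1) := by
      rw [setIntegral_const, hvol, one_smul]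
    rw [hconst, ← integral_sub (integrableOn_const (μ := volume) (s := Ioc _ _) (C := f (n + 1))
      measure_Ioc_lt_top.ne) (hf.mono_set hsub)]
    simpa [hvol] using
      norm_setIntegral_le_of_norm_le_const (measure_Ioc_lt_top (μ := volume)) (hfb n)
  have hdiff : Summable fun n : ℕ ↦ f (n + 1) - I n := .of_norm_bounded hb hterm
  calc ‖∑' n : ℕ, f (n + 1) - ∫ x in Ioi 1, f x‖ = ‖∑' n : ℕ, (f (n + 1) - I n)‖ := by
        have hsum : Summable fun n : ℕ ↦ f (n + 1) := by simpa using hdiff.add hI.summable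
        rw [← hI.tsum_eq, ← hsum.tsum_sub hI.summable]
    _ ≤ ∑' n, b n := tsum_of_norm_bounded hb.hasSum hterm

noncomputable def rpowKernel (α β : ℝ) (z : ℂ) (x : ℝ) : ℂ :=
  1 / (((x ^ α : ℝ) : ℂ) * (z + ((x ^ β : ℝ) : ℂ)))

section rpowKernel

variable {α β c : ℝ} {z : ℂ}

lemma norm_rpowKernel_le (hc : 0 < c) (hz : ∀ t : ℝ, 0 ≤ t → c * (‖z‖ + t) ≤ ‖z + t‖) {x : ℝ}
    (hx : 0 < x) : ‖rpowKernel α β z x‖ ≤ c⁻¹ * x ^ (-(α + β)) := by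
  have hxβ : c * x ^ β ≤ ‖z + ((x ^ β : ℝ) : ℂ)‖ :=
    (hz _ (by positivity)).trans' (by nlinarith [norm_nonneg z])
  calc ‖rpowKernel α β z x‖ = (x ^ α * ‖z + ((x ^ β : ℝ) : ℂ)‖)⁻¹ := by
        simp [rpowKernel, abs_of_pos (rpow_pos_of_pos hx α)]
    _ ≤ (x ^ α * (c * x ^ β))⁻¹ := by gcongr
    _ = c⁻¹ * x ^ (-(α + β)) := by
        rw [rpow_neg hx.le, rpow_add hx]
        ring

lemma integrableOn_rpowKernel (hc : 0 < c) (hz : ∀ t : ℝ, 0 ≤ t → c * (‖z‖ + t) ≤ ‖z + t‖)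
    (hαβ : 1 < α + β) : IntegrableOn (rpowKernel α β z) (Ioi 1) := by
  refine Integrable.mono'
    ((integrableOn_Ioi_rpow_of_lt (show -(α + β) < -1 by linarith) one_pos).const_mul c⁻¹)
    (Measurable.aestronglyMeasurable (by unfold rpowKernel; fun_prop)) ?_
  filter_upwards [ae_restrict_mem measurableSet_Ioi] with x hx
  exact norm_rpowKernel_le hc hz (zero_lt_one.trans hx)

lemma norm_rpowKernel_sub_le (hα : 0 ≤ α) (hβ : 0 ≤ β) (hc : 0 < c)
    (hz : ∀ t : ℝ, 0 ≤ t → c * (‖z‖ + t) ≤ ‖z + t‖) (hz0 : 0 < ‖z‖) {k x : ℝ} (hk : 1 ≤ k)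
    (hkx : k ≤ x) (hx : x ≤ k + 1) :
    ‖rpowKernel α β z k - rpowKernel α β z x‖ ≤
      (α * 2 ^ α / c + β * 2 ^ β / c ^ 2) * k ^ (-1 - α) / ‖z‖ := by
  have hk0 : 0 < k := zero_lt_one.trans_le hk
  have hx0 : 0 < x := hk0.trans_le hkx
  have hkα : 0 < k ^ α := rpow_pos_of_pos hk0 α
  have hxα : 0 < x ^ α := rpow_pos_of_pos hx0 α
  set P := z + ((k ^ β : ℝ) : ℂ)
  set Q := z + ((x ^ β : ℝ) : ℂ)
  have hPz : c * ‖z‖ ≤ ‖P‖ := (hz _ (by positivity)).trans' (by nlinarith [rpow_nonneg hk0.le β])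
  have hPk : c * k ^ β ≤ ‖P‖ := (hz _ (by positivity)).trans' (by nlinarith)
  have hQz : c * ‖z‖ ≤ ‖Q‖ := (hz _ (by positivity)).trans' (by nlinarith [rpow_nonneg hx0.le β])
  have hP : P ≠ 0 := norm_pos_iff.mp ((mul_pos hc hz0).trans_le hPz)
  have hQ : Q ≠ 0 := norm_pos_iff.mp ((mul_pos hc hz0).trans_le hQz)
  have hsplit : rpowKernel α β z k - rpowKernel α β z x =
      ((x ^ α - k ^ α : ℝ) : ℂ) / ((k ^ α : ℝ) * (x ^ α : ℝ) * P) +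
        ((x ^ β - k ^ β : ℝ) : ℂ) / ((x ^ α : ℝ) * P * Q) := by
    have hk' : ((k ^ α : ℝ) : ℂ) ≠ 0 := ofReal_ne_zero.mpr hkα.ne'
    have hx' : ((x ^ α : ℝ) : ℂ) ≠ 0 := ofReal_ne_zero.mpr hxα.ne'
    change 1 / (_ * P) - 1 / (_ * Q) = _
    push_cast
    field_simp
    ring
  have hfirst : ‖((x ^ α - k ^ α : ℝ) : ℂ) / ((k ^ α : ℝ) * (x ^ α : ℝ) * P)‖ ≤
      α * 2 ^ α / c * k ^ (-1 - α) / ‖z‖ :=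
    calc ‖((x ^ α - k ^ α : ℝ) : ℂ) / ((k ^ α : ℝ) * (x ^ α : ℝ) * P)‖
          = (x ^ α - k ^ α) / (k ^ α * x ^ α * ‖P‖) := by
          rw [norm_div, norm_mul, norm_mul, norm_real, norm_real, norm_real,
            Real.norm_of_nonneg (sub_nonneg.mpr (rpow_le_rpow hk0.le hkx hα)),
            Real.norm_of_nonneg hkα.le, Real.norm_of_nonneg hxα.le]
      _ ≤ α * 2 ^ α * k ^ (α - 1) / (k ^ α * k ^ α * (c * ‖z‖)) := by
          gcongr
          exact rpow_sub_rpow_le_of_le_add_one hα hk hkx hx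
      _ = α * 2 ^ α / c * k ^ (-1 - α) / ‖z‖ := by
          rw [show α - 1 = (-1 - α) + α + α by ring, rpow_add hk0, rpow_add hk0]
          field_simp
  have hsecond : ‖((x ^ β - k ^ β : ℝ) : ℂ) / ((x ^ α : ℝ) * P * Q)‖ ≤
      β * 2 ^ β / c ^ 2 * k ^ (-1 - α) / ‖z‖ :=
    calc ‖((x ^ β - k ^ β : ℝ) : ℂ) / ((x ^ α : ℝ) * P * Q)‖
          = (x ^ β - k ^ β) / (x ^ α * ‖P‖ * ‖Q‖) := by
          rw [norm_div, norm_mul, norm_mul, norm_real, norm_real,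
            Real.norm_of_nonneg (sub_nonneg.mpr (rpow_le_rpow hk0.le hkx hβ)),
            Real.norm_of_nonneg hxα.le]
      _ ≤ β * 2 ^ β * k ^ (β - 1) / (k ^ α * (c * k ^ β) * (c * ‖z‖)) := by
          gcongr
          exact rpow_sub_rpow_le_of_le_add_one hβ hk hkx hx
      _ = β * 2 ^ β / c ^ 2 * k ^ (-1 - α) / ‖z‖ := by
          rw [show β - 1 = (-1 - α) + α + β by ring, rpow_add hk0, rpow_add hk0]
          field_simp
  rw [hsplit, add_mul, add_div]
  exact (norm_add_le _ _).trans (add_le_add hfirst hsecond)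

end rpowKernel

theorem stmt5_general (α β δ : ℝ) (hα0 : 0 < α) (hβ : 0 < β) (hαβ : 1 < α + β)
    (hδ : 0 < δ) :
    ∃ C : ℝ, ∀ z : ℂ, |z.arg| < Real.pi - δ → 1 ≤ ‖z‖ →
      ‖(∑' k : ℕ, 1 / (((((k : ℝ) + 1) ^ α : ℝ) : ℂ) * (z + ((((k : ℝ) + 1) ^ β : ℝ) : ℂ))))
        - (∫ x in Set.Ioi (1 : ℝ), 1 / (((x ^ α : ℝ) : ℂ) * (z + ((x ^ β : ℝ) : ℂ))))‖
      ≤ C / ‖z‖ := by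
  set c := Real.sin (min δ π / 2)
  have hc : 0 < c :=
    Real.sin_pos_of_pos_of_lt_pi (half_pos (lt_min hδ pi_pos))
      (by linarith [min_le_right δ π, pi_pos])
  set M := α * 2 ^ α / c + β * 2 ^ β / c ^ 2
  have hS : Summable fun n : ℕ ↦ ((n : ℝ) + 1) ^ (-1 - α) := by
    simpa using
      (summable_nat_add_iff 1).mpr (Real.summable_nat_rpow.mpr (by linarith : -1 - α < -1))
  refine ⟨M * ∑' n : ℕ, ((n : ℝ) + 1) ^ (-1 - α), fun z harg hz ↦ ?_⟩
  have hz0 : 0 < ‖z‖ := zero_lt_one.trans_le hz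
  have hsector : ∀ t : ℝ, 0 ≤ t → c * (‖z‖ + t) ≤ ‖z + t‖ := fun t ht ↦
    sin_half_mul_norm_add_le_norm_add_ofReal (lt_min hδ pi_pos).le
      (by linarith [min_le_left δ π]) ht
  have hcompare := norm_tsum_sub_integral_Ioi_le (integrableOn_rpowKernel hc hsector hαβ)
    ((hS.mul_left M).div_const ‖z‖) fun n x hx ↦
      norm_rpowKernel_sub_le hα0.le hβ.le hc hsector hz0 (by linarith [n.cast_nonneg (α := ℝ)])
        hx.1.le (by linarith [hx.2])
  rw [tsum_div_const, tsum_mul_left] at hcompare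
  exact hcompare

theorem stmt5 (α β δ : ℝ) (hα0 : 0 < α) (hα1 : α ≤ 1) (hβ : 0 < β) (hαβ : 1 < α + β)
    (hδ : 0 < δ) :
    ∃ C : ℝ, ∀ z : ℂ, |z.arg| < Real.pi - δ → 1 ≤ ‖z‖ →
      ‖(∑' k : ℕ, 1 / (((((k : ℝ) + 1) ^ α : ℝ) : ℂ) * (z + ((((k : ℝ) + 1) ^ β : ℝ) : ℂ))))
        - (∫ x in Set.Ioi (1 : ℝ), 1 / (((x ^ α : ℝ) : ℂ) * (z + ((x ^ β : ℝ) : ℂ))))‖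
      ≤ C / ‖z‖ :=
  stmt5_general α β δ hα0 hβ hαβ hδ
end

section
/- Let α = 1 and β > 0, so r = (α + β − 1)/β = 1, and fix δ > 0. Define K(z) = Σ_{k=1}^∞ 1/(k (z + k^β)). Then there exists C such that for all z with |arg z| < π − δ and |z| ≥ 2, |K(z) − (1/β) Log(1 + z)/z| ≤ C/|z|. -/
/-!
Let `g t = 1 / (t (z + t^β))`. Its primitive `G t = -(β z)⁻¹ Log (1 + z t^(-β))` tends to `0` at
infinity and equals `-(1/β) Log (1 + z) / z` at `t = 1`, so `K z - (1/β) Log (1 + z) / z` is the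
sum over `k ≥ 1` of the first-order Taylor remainders `g k - (G (k + 1) - G k)`. Each remainder is
at most `sup_{[k, k+1]} ‖g'‖`. On the sector, `|z + x| ≥ sin (δ/2) (|z| + x)` for every `x ≥ 0`;
this gives `‖g' t‖ ≤ (1 + β) / (sin² (δ/2) t² |z|)`, which is summable in `k`.
-/

open Complex Real Set Filter Topology

theorem mul_norm_add_le_norm_add_ofReal {z : ℂ} {δ x : ℝ} (hδ : 0 ≤ δ)
    (harg : |z.arg| ≤ π - δ) (hx : 0 ≤ x) :
    Real.sin (δ / 2) * (‖z‖ + x) ≤ ‖z + x‖ := by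
  have hre : -Real.cos δ * ‖z‖ ≤ z.re := by
    have hcos : Real.cos (π - δ) ≤ Real.cos z.arg := by
      rw [← Real.cos_abs z.arg]
      exact Real.cos_le_cos_of_nonneg_of_le_pi (abs_nonneg _) (by linarith) harg
    rw [Real.cos_pi_sub] at hcos
    rw [← norm_mul_cos_arg]
    nlinarith [norm_nonneg z]
  have hsin : Real.sin (δ / 2) ^ 2 = (1 - Real.cos δ) / 2 := by
    rw [Real.sin_sq_eq_half_sub, mul_div_cancel₀ δ two_ne_zero]; ring
  have hnorm : ‖z + x‖ ^ 2 = ‖z‖ ^ 2 + 2 * x * z.re + x ^ 2 := by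
    rw [Complex.sq_norm, Complex.sq_norm, Complex.normSq_apply, Complex.normSq_apply]
    simp only [Complex.add_re, Complex.add_im, Complex.ofReal_re, Complex.ofReal_im]
    ring
  -- `‖z + x‖² - sin²(δ/2) (‖z‖ + x)² ≥ cos²(δ/2) (‖z‖ - x)²`
  refine le_of_pow_le_pow_left₀ two_ne_zero (norm_nonneg _) ?_
  rw [mul_pow, hsin, hnorm]
  nlinarith [Real.neg_one_le_cos δ, sq_nonneg (‖z‖ - x),
    mul_le_mul_of_nonneg_left hre (by linarith : 0 ≤ 2 * x)]

theorem norm_sub_sub_smul_le_of_hasDerivAt {E : Type*} [NormedAddCommGroup E] [NormedSpace ℝ E]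
    {G g g' : ℝ → E} {a b C : ℝ} (hab : a ≤ b)
    (hG : ∀ t ∈ Icc a b, HasDerivAt G (g t) t) (hg : ∀ t ∈ Icc a b, HasDerivAt g (g' t) t)
    (hC : ∀ t ∈ Icc a b, ‖g' t‖ ≤ C) :
    ‖G b - G a - (b - a) • g a‖ ≤ C * (b - a) ^ 2 := by
  have hC0 : 0 ≤ C := (norm_nonneg _).trans (hC a ⟨le_rfl, hab⟩)
  have hg_sub : ∀ t ∈ Icc a b, ‖g t - g a‖ ≤ C * (t - a) :=
    norm_image_sub_le_of_norm_deriv_le_segment' (fun t ht => (hg t ht).hasDerivWithinAt)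
      fun t ht => hC t (Ico_subset_Icc_self ht)
  have hφ := norm_image_sub_le_of_norm_deriv_le_segment' (f := fun t => G t - t • g a)
    (C := C * (b - a))
    (fun t ht => ((hG t ht).sub ((hasDerivAt_id t).smul_const (g a))).hasDerivWithinAt)
    (fun t ht => by
      simpa using (hg_sub t (Ico_subset_Icc_self ht)).trans
        (mul_le_mul_of_nonneg_left (by linarith [ht.2]) hC0)) b ⟨hab, le_rfl⟩
  calc ‖G b - G a - (b - a) • g a‖ = ‖G b - b • g a - (G a - a • g a)‖ := by
        rw [sub_smul]; congr 1; abel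
    _ ≤ C * (b - a) * (b - a) := hφ
    _ = C * (b - a) ^ 2 := by ring

theorem norm_tsum_add_le_of_hasDerivAt {E : Type*} [NormedAddCommGroup E] [NormedSpace ℝ E]
    {G g g' : ℝ → E} {B : ℕ → ℝ} {a : ℝ}
    (hG : ∀ t ≥ a, HasDerivAt G (g t) t) (hg : ∀ t ≥ a, HasDerivAt g (g' t) t)
    (hG_lim : Tendsto G atTop (𝓝 0)) (hsum : Summable fun k : ℕ => g (k + a))
    (hB : ∀ k : ℕ, ∀ t ∈ Icc (k + a) (k + a + 1), ‖g' t‖ ≤ B k) (hB_sum : Summable B) :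
    ‖∑' k : ℕ, g (k + a) + G a‖ ≤ ∑' k, B k := by
  set e : ℕ → E := fun k => g (k + a) - (G (k + a + 1) - G (k + a))
  have he : ∀ k : ℕ, ‖e k‖ ≤ B k := by
    intro k
    have hk : ∀ t ∈ Icc ((k : ℝ) + a) (k + a + 1), t ≥ a := fun t ht => by
      linarith [ht.1, (Nat.cast_nonneg k : (0 : ℝ) ≤ k)]
    have := norm_sub_sub_smul_le_of_hasDerivAt (by linarith) (fun t ht => hG t (hk t ht))
      (fun t ht => hg t (hk t ht)) (hB k)
    rw [add_sub_cancel_left, one_smul, one_pow, mul_one] at this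
    rwa [norm_sub_rev] at this
  have hB0 : ∀ k, 0 ≤ B k := fun k => (norm_nonneg _).trans (he k)
  have hpartial : ∀ N : ℕ, ∑ k ∈ Finset.range N, e k =
      ∑ k ∈ Finset.range N, g (k + a) - (G (N + a) - G a) := by
    intro N
    have := Finset.sum_range_sub (fun k : ℕ => G (k + a)) N
    push_cast [add_right_comm _ (1 : ℝ) a, zero_add] at this
    rw [Finset.sum_sub_distrib, this]
  have hlim : Tendsto (fun N : ℕ => ∑ k ∈ Finset.range N, e k) atTop
      (𝓝 (∑' k : ℕ, g (k + a) + G a)) := by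
    have hGN : Tendsto (fun N : ℕ => G (N + a)) atTop (𝓝 0) :=
      hG_lim.comp (tendsto_atTop_add_const_right _ a tendsto_natCast_atTop_atTop)
    simpa [hpartial] using hsum.hasSum.tendsto_sum_nat.sub (hGN.sub_const (G a))
  refine le_of_tendsto (continuous_norm.tendsto _ |>.comp hlim) (Eventually.of_forall fun N => ?_)
  calc ‖∑ k ∈ Finset.range N, e k‖ ≤ ∑ k ∈ Finset.range N, B k :=
        norm_sum_le_of_le _ fun k _ => he k
    _ ≤ ∑' k, B k := hB_sum.sum_le_tsum _ fun k _ => hB0 k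

lemma add_ofReal_ne_zero_of_mul_le {z : ℂ} {c : ℝ} (hc : 0 < c) (hz : z ≠ 0)
    (hsector : ∀ x : ℝ, 0 ≤ x → c * (‖z‖ + x) ≤ ‖z + x‖) {x : ℝ} (hx : 0 ≤ x) :
    z + x ≠ 0 :=
  norm_pos_iff.mp <| (by positivity : 0 < c * (‖z‖ + x)).trans_le (hsector x hx)

lemma one_add_mul_ofReal_mem_slitPlane {z : ℂ} (hz : z ∈ slitPlane) {s : ℝ} (hs : 0 < s) :
    1 + z * s ∈ slitPlane := by
  rw [mem_slitPlane_iff] at hz ⊢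
  simp only [add_re, one_re, mul_re, ofReal_re, ofReal_im, mul_zero, sub_zero, add_im, one_im,
    mul_im, zero_add]
  rcases hz with hre | him
  · exact Or.inl (by positivity)
  · exact Or.inr (mul_ne_zero him hs.ne')

noncomputable def kernelSummand (β : ℝ) (z : ℂ) (t : ℝ) : ℂ :=
  1 / ((t : ℂ) * (z + ((t ^ β : ℝ) : ℂ)))

noncomputable def kernelPrimitive (β : ℝ) (z : ℂ) (t : ℝ) : ℂ :=
  -(1 / (β * z)) * Complex.log (1 + z * ((t ^ (-β) : ℝ) : ℂ))

section

variable {β : ℝ} {z : ℂ}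

lemma hasDerivAt_kernelSummand {t : ℝ} (ht : 0 < t) (hne : z + ((t ^ β : ℝ) : ℂ) ≠ 0) :
    HasDerivAt (kernelSummand β z)
      (-(z + (1 + β) * ((t ^ β : ℝ) : ℂ)) / ((t : ℂ) * (z + ((t ^ β : ℝ) : ℂ))) ^ 2) t := by
  have hpow : HasDerivAt (fun s : ℝ => ((s ^ β : ℝ) : ℂ)) ((β * t ^ (β - 1) : ℝ) : ℂ) t :=
    (Real.hasDerivAt_rpow_const (Or.inl ht.ne')).ofReal_comp
  have hden := (hasDerivAt_id t).ofReal_comp.mul (hpow.const_add z)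
  have ht' : (t : ℂ) ≠ 0 := ofReal_ne_zero.mpr ht.ne'
  refine ((hasDerivAt_const t (1 : ℂ)).div hden (mul_ne_zero ht' hne)).congr_deriv ?_
  have htβ : ((t ^ (β - 1) : ℝ) : ℂ) = ((t ^ β : ℝ) : ℂ) / t := by
    rw [Real.rpow_sub_one ht.ne', ofReal_div]
  simp only [Pi.mul_apply, id, ofReal_mul, htβ, ofReal_one]
  field_simp
  ring

lemma hasDerivAt_kernelPrimitive (hβ : β ≠ 0) (hz : z ∈ slitPlane) {t : ℝ} (ht : 0 < t) :
    HasDerivAt (kernelPrimitive β z) (kernelSummand β z t) t := by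
  have hpow : HasDerivAt (fun s : ℝ => ((s ^ (-β) : ℝ) : ℂ)) ((-β * t ^ (-β - 1) : ℝ) : ℂ) t :=
    (Real.hasDerivAt_rpow_const (Or.inl ht.ne')).ofReal_comp
  have hslit := one_add_mul_ofReal_mem_slitPlane hz (Real.rpow_pos_of_pos ht (-β))
  refine (((hpow.const_mul z).const_add 1).clog_real hslit |>.const_mul
    (-(1 / (β * z)))).congr_deriv ?_
  have hz0 := slitPlane_ne_zero hz
  have ht' : (t : ℂ) ≠ 0 := ofReal_ne_zero.mpr ht.ne'
  have hu : ((t ^ β : ℝ) : ℂ) ≠ 0 := ofReal_ne_zero.mpr (Real.rpow_pos_of_pos ht β).ne'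
  have hβ' : (β : ℂ) ≠ 0 := ofReal_ne_zero.mpr hβ
  have hne : 1 + z * ((t ^ β : ℝ) : ℂ)⁻¹ ≠ 0 := by
    simpa [Real.rpow_neg ht.le] using slitPlane_ne_zero hslit
  rw [Real.rpow_sub_one ht.ne', Real.rpow_neg ht.le]
  simp only [kernelSummand, ofReal_mul, ofReal_div, ofReal_inv, ofReal_neg]
  field_simp
  ring

variable {c : ℝ}

lemma norm_deriv_kernelSummand_le (hβ : 0 ≤ β) (hc : 0 < c) (hz : z ≠ 0)
    (hsector : ∀ x : ℝ, 0 ≤ x → c * (‖z‖ + x) ≤ ‖z + x‖) {t : ℝ} (ht : 0 < t) :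
    ‖-(z + (1 + β) * ((t ^ β : ℝ) : ℂ)) / ((t : ℂ) * (z + ((t ^ β : ℝ) : ℂ))) ^ 2‖
      ≤ (1 + β) / (c ^ 2 * ‖z‖) / t ^ 2 := by
  set u : ℝ := t ^ β
  have hu : 0 < u := Real.rpow_pos_of_pos ht β
  have hz' : 0 < ‖z‖ := norm_pos_iff.mpr hz
  have hnum : ‖-(z + (1 + β) * (u : ℂ))‖ ≤ (1 + β) * (‖z‖ + u) := by
    rw [norm_neg]
    refine (norm_add_le _ _).trans ?_
    rw [← ofReal_one, ← ofReal_add, ← ofReal_mul, norm_real, Real.norm_of_nonneg (by positivity)]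
    nlinarith
  have hden : t * (c * (‖z‖ + u)) ≤ ‖(t : ℂ) * (z + u)‖ := by
    rw [norm_mul, norm_real, Real.norm_of_nonneg ht.le]
    exact mul_le_mul_of_nonneg_left (hsector u hu.le) ht.le
  calc ‖-(z + (1 + β) * (u : ℂ)) / ((t : ℂ) * (z + u)) ^ 2‖
      = ‖-(z + (1 + β) * (u : ℂ))‖ / ‖(t : ℂ) * (z + u)‖ ^ 2 := by rw [norm_div, norm_pow]
    _ ≤ (1 + β) * (‖z‖ + u) / (t * (c * (‖z‖ + u))) ^ 2 := by gcongr
    _ = (1 + β) / (c ^ 2 * (‖z‖ + u)) / t ^ 2 := by field_simp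
    _ ≤ (1 + β) / (c ^ 2 * ‖z‖) / t ^ 2 := by gcongr; linarith

lemma norm_kernelSummand_le (hc : 0 < c)
    (hsector : ∀ x : ℝ, 0 ≤ x → c * (‖z‖ + x) ≤ ‖z + x‖) {t : ℝ} (ht : 0 < t) :
    ‖kernelSummand β z t‖ ≤ c⁻¹ * t ^ (-(1 + β)) := by
  have hu : 0 < t ^ β := Real.rpow_pos_of_pos ht β
  have hden : t * (c * t ^ β) ≤ ‖(t : ℂ) * (z + ((t ^ β : ℝ) : ℂ))‖ := by
    rw [norm_mul, norm_real, Real.norm_of_nonneg ht.le]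
    refine mul_le_mul_of_nonneg_left ((mul_le_mul_of_nonneg_left ?_ hc.le).trans
      (hsector _ hu.le)) ht.le
    linarith [norm_nonneg z]
  calc ‖kernelSummand β z t‖ = 1 / ‖(t : ℂ) * (z + ((t ^ β : ℝ) : ℂ))‖ := by
        rw [kernelSummand, norm_div, norm_one]
    _ ≤ 1 / (t * (c * t ^ β)) := by gcongr
    _ = c⁻¹ * t ^ (-(1 + β)) := by
        rw [Real.rpow_neg ht.le, Real.rpow_add ht, Real.rpow_one]; field_simp

lemma summable_kernelSummand (hβ : 0 < β) (hc : 0 < c)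
    (hsector : ∀ x : ℝ, 0 ≤ x → c * (‖z‖ + x) ≤ ‖z + x‖) :
    Summable fun k : ℕ => kernelSummand β z (k + 1) := by
  have hp : Summable fun k : ℕ => ((k : ℝ) + 1) ^ (-(1 + β)) := by
    simpa using (summable_nat_add_iff 1).mpr (Real.summable_nat_rpow.mpr (by linarith))
  exact (hp.mul_left c⁻¹).of_norm_bounded fun k => norm_kernelSummand_le hc hsector (by positivity)

lemma tendsto_kernelPrimitive_atTop (hβ : 0 < β) :
    Tendsto (kernelPrimitive β z) atTop (𝓝 0) := by
  have harg : Tendsto (fun t : ℝ => 1 + z * ((t ^ (-β) : ℝ) : ℂ)) atTop (𝓝 1) := by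
    simpa using
      (((continuous_ofReal.tendsto 0).comp (tendsto_rpow_neg_atTop hβ)).const_mul z).const_add 1
  have hlog := ((continuousAt_clog one_mem_slitPlane).tendsto.comp harg).const_mul (-(1 / (β * z)))
  rwa [Complex.log_one, mul_zero] at hlog

theorem norm_tsum_kernelSummand_sub_log_le (hβ : 0 < β) (hc : 0 < c) (hz : z ∈ slitPlane)
    (hsector : ∀ x : ℝ, 0 ≤ x → c * (‖z‖ + x) ≤ ‖z + x‖) :
    ‖(∑' k : ℕ, kernelSummand β z (k + 1)) - (1 / (β : ℂ)) * Complex.log (1 + z) / z‖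
      ≤ (1 + β) / c ^ 2 * (∑' k : ℕ, 1 / ((k : ℝ) + 1) ^ 2) / ‖z‖ := by
  have hz0 := slitPlane_ne_zero hz
  have hsq : Summable fun k : ℕ => 1 / ((k : ℝ) + 1) ^ 2 := by
    simpa using (summable_nat_add_iff 1).mpr (Real.summable_one_div_nat_pow.mpr one_lt_two)
  set M := (1 + β) / (c ^ 2 * ‖z‖)
  have hG1 : kernelPrimitive β z 1 = -((1 / (β : ℂ)) * Complex.log (1 + z) / z) := by
    simp only [kernelPrimitive, Real.one_rpow, ofReal_one, mul_one]; ring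
  have key := norm_tsum_add_le_of_hasDerivAt (a := 1) (B := fun k => M * (1 / ((k : ℝ) + 1) ^ 2))
    (fun t ht => hasDerivAt_kernelPrimitive hβ.ne' hz (by linarith))
    (fun t ht => hasDerivAt_kernelSummand (by linarith)
      (add_ofReal_ne_zero_of_mul_le hc hz0 hsector (Real.rpow_nonneg (by linarith) β)))
    (tendsto_kernelPrimitive_atTop hβ) (summable_kernelSummand hβ hc hsector)
    (fun k t ht => by
      have hkt : (k : ℝ) + 1 ≤ t := ht.1
      have ht0 : 0 < t := by linarith [k.cast_nonneg (α := ℝ)]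
      refine (norm_deriv_kernelSummand_le hβ.le hc hz0 hsector ht0).trans ?_
      rw [mul_one_div]
      gcongr)
    (hsq.mul_left M)
  rw [hG1, ← sub_eq_add_neg, tsum_mul_left] at key
  calc _ ≤ M * ∑' k : ℕ, 1 / ((k : ℝ) + 1) ^ 2 := key
    _ = _ := by ring

end

theorem stmt7 (β δ : ℝ) (hβ : 0 < β) (hδ : 0 < δ) :
    ∃ C : ℝ, ∀ z : ℂ, |z.arg| < Real.pi - δ → 2 ≤ ‖z‖ →
      ‖(∑' k : ℕ, 1 / ((((k : ℝ) + 1 : ℝ) : ℂ) * (z + ((((k : ℝ) + 1) ^ β : ℝ) : ℂ))))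
        - (1 / (β : ℂ)) * Complex.log (1 + z) / z‖
      ≤ C / ‖z‖ := by
  set δ' := min δ π
  have hδ' : 0 < δ' := lt_min hδ pi_pos
  have hc : 0 < Real.sin (δ' / 2) :=
    Real.sin_pos_of_pos_of_lt_pi (by positivity) (by linarith [min_le_right δ π, pi_pos])
  refine ⟨(1 + β) / Real.sin (δ' / 2) ^ 2 * ∑' k : ℕ, 1 / ((k : ℝ) + 1) ^ 2, fun z harg hz => ?_⟩
  have harg' : |z.arg| ≤ π - δ' := by linarith [min_le_left δ π]
  have hslit : z ∈ slitPlane := mem_slitPlane_iff_arg.mpr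
    ⟨fun h => by rw [h, abs_of_pos pi_pos] at harg; linarith, norm_pos_iff.mp (by linarith)⟩
  exact norm_tsum_kernelSummand_sub_log_le hβ hc hslit
    fun x hx => mul_norm_add_le_norm_add_ofReal hδ'.le harg' hx
end

section
/- Let 0 < α ≤ 1, β > 0, α + β > 1, r = (α + β − 1)/β with 0 < r < 1, and fix δ > 0. Define K(z) = Σ_{k=1}^∞ 1/(k^α (z + k^β)). Then there exists C such that for all z with |arg z| < π − δ and |z| ≥ 2, |z K'(z)| ≤ C/|z|^r. -/
open Complex Real MeasureTheory Set Filter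

/-!
Differentiating termwise, `z K'(z) = -z ∑ 1 / (k ^ α (z + k ^ β) ^ 2)`. In the sector
`|arg z| ≤ π - δ` one has `|z + t| ≥ sin (δ / 2) (|z| + t)` for `t ≥ 0`, so with `x = |z|`,
`|z K'(z)| ≤ sin (δ / 2) ^ (-2) · x ∑ 1 / (k ^ α (x + k ^ β) ^ 2)`. Split this real series at
`N ≈ x ^ (1 / β)`: the terms `k < N` contribute at most `x ^ (-2) ∑_{k ≤ N} k ^ (-α)`, which is
`≲ x ^ (-2) N ^ (1 - α)`, and the terms `k ≥ N` at most `x ^ (-1) ∑_{k > N} k ^ (-α - β)`, which is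
`≲ x ^ (-1) N ^ (1 - α - β)`; both are `≲ x ^ (-1 - r)`. The power sums are compared with
integrals through the concavity of `t ↦ t ^ q / q` for `q ≤ 1`.
-/

lemma rpow_sub_one_mul_sub_le {q a b : ℝ} (hq : q ≤ 1) (hq0 : q ≠ 0) (ha : 0 ≤ a)
    (ha' : 0 < a ∨ 0 < q) (hab : a ≤ b) :
    b ^ (q - 1) * (b - a) ≤ (b ^ q - a ^ q) / q := by
  rcases hab.eq_or_lt with rfl | hlt
  · simp
  have hcont : ContinuousOn (fun x : ℝ => x ^ q / q) (Icc a b) := fun x hx =>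
    ((continuousAt_rpow_const x q (ha'.imp (fun h => (h.trans_le hx.1).ne') le_of_lt)).div_const
      q).continuousWithinAt
  have hderiv : ∀ x ∈ Ioo a b, HasDerivAt (fun x : ℝ => x ^ q / q) (x ^ (q - 1)) x := fun x hx =>
    ((hasDerivAt_rpow_const (Or.inl (ha.trans_lt hx.1).ne')).div_const q).congr_deriv
      (by field_simp)
  obtain ⟨c, hc, hslope⟩ := exists_hasDerivAt_eq_slope _ _ hlt hcont hderiv
  have hcb : b ^ (q - 1) ≤ c ^ (q - 1) :=
    rpow_le_rpow_of_nonpos (ha.trans_lt hc.1) hc.2.le (by linarith)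
  calc b ^ (q - 1) * (b - a) ≤ c ^ (q - 1) * (b - a) := by gcongr
    _ = (b ^ q - a ^ q) / q := by
      rw [hslope, div_mul_cancel₀ _ (sub_ne_zero.2 hlt.ne'), sub_div]

lemma sum_range_rpow_sub_one_le {q : ℝ} (hq : q ≤ 1) (hq0 : q ≠ 0) {m : ℕ}
    (hm : 0 < m ∨ 0 < q) (n : ℕ) :
    ∑ i ∈ Finset.range n, ((m : ℝ) + i + 1) ^ (q - 1)
      ≤ (((m : ℝ) + n) ^ q - (m : ℝ) ^ q) / q := by
  calc ∑ i ∈ Finset.range n, ((m : ℝ) + i + 1) ^ (q - 1)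
      ≤ ∑ i ∈ Finset.range n, (((m : ℝ) + (i + 1 : ℕ)) ^ q / q - ((m : ℝ) + i) ^ q / q) := by
        refine Finset.sum_le_sum fun i _ => ?_
        have := rpow_sub_one_mul_sub_le (a := m + i) (b := m + i + 1) hq hq0 (by positivity)
          (hm.imp_left fun h => by positivity) (by linarith)
        push_cast
        rw [← sub_div, ← add_assoc]
        simpa using this
    _ = (((m : ℝ) + n) ^ q - (m : ℝ) ^ q) / q := by
        rw [Finset.sum_range_sub (fun i => ((m : ℝ) + i) ^ q / q), sub_div]
        simp

lemma sum_range_rpow_neg_le {s : ℝ} (hs0 : 0 ≤ s) (hs1 : s < 1) (n : ℕ) :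
    ∑ i ∈ Finset.range n, ((i : ℝ) + 1) ^ (-s) ≤ (n : ℝ) ^ (1 - s) / (1 - s) := by
  have := sum_range_rpow_sub_one_le (q := 1 - s) (m := 0) (by linarith) (by linarith)
    (Or.inr (by linarith)) n
  simpa [zero_rpow (show 1 - s ≠ 0 by linarith)] using this

lemma sum_range_nat_add_rpow_neg_le {p : ℝ} (hp : 1 < p) {N : ℕ} (hN : 0 < N) (n : ℕ) :
    ∑ i ∈ Finset.range n, ((N : ℝ) + i + 1) ^ (-p) ≤ (N : ℝ) ^ (1 - p) / (p - 1) := by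
  have := sum_range_rpow_sub_one_le (q := 1 - p) (by linarith) (by linarith) (Or.inl hN) n
  have hNn : 0 ≤ ((N : ℝ) + n) ^ (1 - p) := by positivity
  rw [sub_sub_cancel_left] at this
  calc _ ≤ _ := this
    _ = ((N : ℝ) ^ (1 - p) - ((N : ℝ) + n) ^ (1 - p)) / (p - 1) := by
        rw [← neg_sub p 1, div_neg, ← neg_div, neg_sub]
    _ ≤ _ := by gcongr; linarith

lemma summable_inv_rpow_mul_one_add_rpow {α β : ℝ} (hαβ : 1 < α + β) :
    Summable fun k : ℕ => (((k : ℝ) + 1) ^ α * (1 + ((k : ℝ) + 1) ^ β))⁻¹ := by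
  have hsum : Summable fun k : ℕ => ((k : ℝ) + 1) ^ (-(α + β)) := by
    simpa using (summable_nat_add_iff 1).2 (Real.summable_nat_rpow.2 (by linarith))
  refine hsum.of_nonneg_of_le (fun k => by positivity) fun k => ?_
  rw [rpow_neg (by positivity), rpow_add (by positivity)]
  gcongr
  linarith

lemma Summable.inv_mul_add_sq {a b : ℕ → ℝ} (hsum : Summable fun k => (a k * (1 + b k))⁻¹)
    (ha : ∀ k, 0 < a k) (hb : ∀ k, 0 ≤ b k) {x : ℝ} (hx : 1 ≤ x) :
    Summable fun k => (a k * (x + b k) ^ 2)⁻¹ := by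
  refine hsum.of_nonneg_of_le (fun k => ?_) fun k => ?_
  · have := ha k; have := hb k; positivity
  · have := hb k
    refine inv_anti₀ (mul_pos (ha k) (by linarith)) (mul_le_mul_of_nonneg_left ?_ (ha k).le)
    nlinarith

lemma exists_mul_tsum_inv_rpow_mul_add_rpow_sq_le {α β : ℝ} (hα0 : 0 ≤ α) (hα1 : α < 1)
    (hβ : 0 < β) (hαβ : 1 < α + β) :
    ∃ C : ℝ, ∀ x : ℝ, 1 ≤ x →
      x * ∑' k : ℕ, (((k : ℝ) + 1) ^ α * (x + ((k : ℝ) + 1) ^ β) ^ 2)⁻¹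
        ≤ C / x ^ ((α + β - 1) / β) := by
  refine ⟨2 ^ (1 - α) / (1 - α) + 1 / (α + β - 1), fun x hx => ?_⟩
  set f : ℕ → ℝ := fun k => (((k : ℝ) + 1) ^ α * (x + ((k : ℝ) + 1) ^ β) ^ 2)⁻¹
  have hx0 : 0 < x := by linarith
  set N := ⌈x ^ β⁻¹⌉₊
  have hxN : x ^ β⁻¹ ≤ N := Nat.le_ceil _
  have hx1 : 1 ≤ x ^ β⁻¹ := one_le_rpow hx (inv_nonneg.2 hβ.le)
  have hN0 : 0 < N := Nat.cast_pos.1 (show (0 : ℝ) < N by linarith)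
  have hN2 : (N : ℝ) ≤ 2 * x ^ β⁻¹ :=
    (Nat.ceil_lt_add_one (by linarith)).le.trans (by linarith)
  have head : x * ∑ k ∈ Finset.range N, f k
      ≤ 2 ^ (1 - α) / (1 - α) / x ^ ((α + β - 1) / β) := by
    calc x * ∑ k ∈ Finset.range N, f k
        ≤ x * ∑ k ∈ Finset.range N, ((k : ℝ) + 1) ^ (-α) / x ^ 2 := by
          gcongr with k
          simp only [f]
          rw [rpow_neg (by positivity), div_eq_mul_inv, ← mul_inv]
          gcongr
          linarith [rpow_nonneg (by positivity : (0 : ℝ) ≤ k + 1) β]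
      _ = (∑ k ∈ Finset.range N, ((k : ℝ) + 1) ^ (-α)) / x := by
          rw [← Finset.sum_div]; field_simp
      _ ≤ (N : ℝ) ^ (1 - α) / (1 - α) / x := by
          gcongr; exact sum_range_rpow_neg_le hα0 hα1 N
      _ ≤ (2 * x ^ β⁻¹) ^ (1 - α) / (1 - α) / x := by gcongr
      _ = 2 ^ (1 - α) / (1 - α) / x ^ ((α + β - 1) / β) := by
          rw [mul_rpow zero_le_two (by positivity), ← rpow_mul hx0.le,
            show β⁻¹ * (1 - α) = 1 - (α + β - 1) / β by field_simp; ring, rpow_sub hx0,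
            rpow_one]
          field_simp
  have tail : x * ∑' i, f (i + N) ≤ 1 / (α + β - 1) / x ^ ((α + β - 1) / β) := by
    calc x * ∑' i, f (i + N) = ∑' i, x * f (i + N) := tsum_mul_left.symm
      _ ≤ (N : ℝ) ^ (1 - (α + β)) / (α + β - 1) := by
          refine tsum_le_of_sum_range_le (fun i => by positivity) fun n =>
            (Finset.sum_le_sum fun i _ => ?_).trans (sum_range_nat_add_rpow_neg_le hαβ hN0 n)
          have hk : (0 : ℝ) < N + i + 1 := by positivity
          simp only [f, Nat.cast_add, add_comm (i : ℝ)]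
          rw [rpow_neg hk.le, rpow_add hk]
          set A := ((N : ℝ) + i + 1) ^ α
          set B := ((N : ℝ) + i + 1) ^ β
          have hB : 0 < B := rpow_pos_of_pos hk β
          calc x * (A * (x + B) ^ 2)⁻¹ ≤ x * (A * (B * x))⁻¹ := by gcongr; nlinarith
            _ = (A * B)⁻¹ := by field_simp
      _ ≤ (x ^ β⁻¹) ^ (1 - (α + β)) / (α + β - 1) := by
          gcongr ?_ / _
          exact rpow_le_rpow_of_nonpos (by positivity) hxN (by linarith)
      _ = 1 / (α + β - 1) / x ^ ((α + β - 1) / β) := by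
          rw [← rpow_mul hx0.le, show β⁻¹ * (1 - (α + β)) = -((α + β - 1) / β) by ring,
            rpow_neg hx0.le]
          ring
  have hsum := (summable_inv_rpow_mul_one_add_rpow hαβ).inv_mul_add_sq
    (fun k => by positivity) (fun k => by positivity) hx
  rw [← hsum.sum_add_tsum_nat_add N, mul_add, add_div]
  exact add_le_add head tail

lemma sin_half_mul_le_norm_add_ofReal {δ : ℝ} (hδ : 0 ≤ δ) {z : ℂ} (hz : |z.arg| ≤ π - δ)
    {t : ℝ} (ht : 0 ≤ t) : Real.sin (δ / 2) * (‖z‖ + t) ≤ ‖z + t‖ := by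
  have hcos : -Real.cos δ ≤ Real.cos z.arg := by
    rw [← Real.cos_abs z.arg, ← Real.cos_pi_sub]
    exact Real.cos_le_cos_of_nonneg_of_le_pi (abs_nonneg _) (by linarith) hz
  have hre : -(‖z‖ * Real.cos δ) ≤ z.re := by
    rw [← norm_mul_cos_arg]
    nlinarith [norm_nonneg z]
  have hsin : Real.sin (δ / 2) ^ 2 = (1 - Real.cos δ) / 2 := by
    rw [Real.sin_sq, Real.cos_sq, show 2 * (δ / 2) = δ by ring]
    ring
  have hnorm : ‖z + t‖ ^ 2 = ‖z‖ ^ 2 + 2 * t * z.re + t ^ 2 := by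
    simp only [Complex.sq_norm, Complex.normSq_apply, add_re, add_im, ofReal_re, ofReal_im]
    ring
  refine le_of_abs_le (abs_le_of_sq_le_sq ?_ (norm_nonneg _))
  rw [mul_pow, hsin, hnorm]
  -- the difference is at least `(1 + cos δ) / 2 * (‖z‖ - t) ^ 2`
  nlinarith [mul_le_mul_of_nonneg_left hre (by positivity : (0 : ℝ) ≤ 2 * t),
    mul_nonneg (by linarith [Real.neg_one_le_cos δ] : 0 ≤ 1 + Real.cos δ) (sq_nonneg (‖z‖ - t))]

lemma hasSum_deriv_tsum_one_div_mul_add {a b : ℕ → ℝ} {U : Set ℂ} {z : ℂ} {c : ℝ}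
    (hU : IsOpen U) (hz : z ∈ U) (hc : 0 < c) (ha : ∀ k, 0 < a k) (hb : ∀ k, 0 ≤ b k)
    (hsum : Summable fun k => (a k * (1 + b k))⁻¹)
    (hU_le : ∀ k, ∀ w ∈ U, c * (1 + b k) ≤ ‖w + b k‖) :
    HasSum (fun k => -((a k : ℂ) * (z + b k) ^ 2)⁻¹)
      (deriv (fun w => ∑' k, 1 / ((a k : ℂ) * (w + b k))) z) := by
  have hpos : ∀ k, ∀ w ∈ U, 0 < ‖w + b k‖ := fun k w hw =>
    (mul_pos hc (by linarith [hb k])).trans_le (hU_le k w hw)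
  have hderiv : ∀ k, ∀ w ∈ U, HasDerivAt (fun w => 1 / ((a k : ℂ) * (w + b k)))
      (-((a k : ℂ) * (w + b k) ^ 2)⁻¹) w := by
    intro k w hw
    have ha0 : (a k : ℂ) ≠ 0 := ofReal_ne_zero.2 (ha k).ne'
    have hw0 : w + b k ≠ 0 := norm_pos_iff.1 (hpos k w hw)
    simp only [one_div]
    exact ((((hasDerivAt_id' w).add_const (b k : ℂ)).const_mul (a k : ℂ)).inv
      (mul_ne_zero ha0 hw0)).congr_deriv (by field_simp)
  have hbound : ∀ k, ∀ w ∈ U, ‖1 / ((a k : ℂ) * (w + b k))‖ ≤ c⁻¹ * (a k * (1 + b k))⁻¹ := by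
    intro k w hw
    rw [norm_div, norm_one, norm_mul, norm_real, Real.norm_of_nonneg (ha k).le, ← mul_inv,
      one_div]
    refine inv_anti₀ (mul_pos hc (mul_pos (ha k) (by linarith [hb k]))) ?_
    calc c * (a k * (1 + b k)) = a k * (c * (1 + b k)) := by ring
      _ ≤ a k * ‖w + b k‖ := by gcongr; exacts [(ha k).le, hU_le k w hw]
  have h := hasSum_deriv_of_summable_norm (hsum.mul_left c⁻¹)
    (fun k w hw => (hderiv k w hw).differentiableAt.differentiableWithinAt) hU hbound hz
  rwa [funext fun k => (hderiv k z hz).deriv] at h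

lemma norm_deriv_tsum_one_div_mul_add_le {a b : ℕ → ℝ} {z : ℂ} {ε : ℝ} (hε : 0 < ε)
    (hz : 2 ≤ ‖z‖) (hsector : ∀ t : ℝ, 0 ≤ t → ε * (‖z‖ + t) ≤ ‖z + t‖) (ha : ∀ k, 0 < a k)
    (hb : ∀ k, 0 ≤ b k) (hsum : Summable fun k => (a k * (1 + b k))⁻¹) :
    ‖deriv (fun w => ∑' k, 1 / ((a k : ℂ) * (w + b k))) z‖
      ≤ (ε ^ 2)⁻¹ * ∑' k, (a k * (‖z‖ + b k) ^ 2)⁻¹ := by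
  have hball : ∀ k, ∀ w ∈ Metric.ball z ε, ε * (1 + b k) ≤ ‖w + b k‖ := by
    intro k w hw
    have htri : ‖z + b k‖ - ‖z - w‖ ≤ ‖w + b k‖ := by
      simpa [add_comm _ w] using norm_sub_norm_le (z + b k) (z - w)
    rw [Metric.mem_ball, dist_comm, dist_eq_norm] at hw
    nlinarith [hsector (b k) (hb k)]
  have hderiv := hasSum_deriv_tsum_one_div_mul_add Metric.isOpen_ball
    (Metric.mem_ball_self hε) hε ha hb hsum hball
  have hterm : ∀ k,
      ‖-((a k : ℂ) * (z + b k) ^ 2)⁻¹‖ ≤ (ε ^ 2)⁻¹ * (a k * (‖z‖ + b k) ^ 2)⁻¹ := by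
    intro k
    have hzb := hsector (b k) (hb k)
    have hpos : 0 < ε * (‖z‖ + b k) := by nlinarith [hb k]
    rw [norm_neg, norm_inv, norm_mul, norm_pow, norm_real, Real.norm_of_nonneg (ha k).le,
      ← mul_inv, ← mul_assoc, mul_comm (ε ^ 2), mul_assoc, ← mul_pow]
    gcongr
    · exact mul_pos (ha k) (by positivity)
    · exact (ha k).le
  rw [← tsum_mul_left]
  exact hderiv.norm_le_of_bounded ((hsum.inv_mul_add_sq ha hb (by linarith)).mul_left _).hasSum
    hterm

theorem stmt8_general (α β δ : ℝ) (hα0 : 0 < α) (hβ : 0 < β) (hαβ : 1 < α + β)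
    (r : ℝ) (hr : r = (α + β - 1) / β) (hr1 : r < 1) (hδ : 0 < δ)
    (K : ℂ → ℂ)
    (hK : ∀ z : ℂ, K z = ∑' k : ℕ,
      1 / (((((k : ℝ) + 1) ^ α : ℝ) : ℂ) * (z + ((((k : ℝ) + 1) ^ β : ℝ) : ℂ)))) :
    ∃ C : ℝ, ∀ z : ℂ, |z.arg| < Real.pi - δ → 2 ≤ ‖z‖ →
      ‖z * deriv K z‖ ≤ C / ‖z‖ ^ r := by
  have hα1 : α < 1 := by linarith [(div_lt_one hβ).1 (hr ▸ hr1)]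
  obtain ⟨C, hC⟩ := exists_mul_tsum_inv_rpow_mul_add_rpow_sq_le hα0.le hα1 hβ hαβ
  set ε := Real.sin (min δ π / 2)
  have hε : 0 < ε :=
    sin_pos_of_pos_of_lt_pi (by positivity) (by linarith [min_le_right δ π, pi_pos])
  refine ⟨C / ε ^ 2, fun z hz hz2 => ?_⟩
  have hsector : ∀ t : ℝ, 0 ≤ t → ε * (‖z‖ + t) ≤ ‖z + t‖ := fun t ht =>
    sin_half_mul_le_norm_add_ofReal (by positivity) (by linarith [min_le_left δ π]) ht
  rw [show K = _ from funext hK, norm_mul]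
  calc _ ≤ ‖z‖ * ((ε ^ 2)⁻¹ *
        ∑' k : ℕ, (((k : ℝ) + 1) ^ α * (‖z‖ + ((k : ℝ) + 1) ^ β) ^ 2)⁻¹) := by
        gcongr
        exact norm_deriv_tsum_one_div_mul_add_le hε hz2 hsector (fun k => by positivity)
          (fun k => by positivity) (summable_inv_rpow_mul_one_add_rpow hαβ)
    _ ≤ (ε ^ 2)⁻¹ * (C / ‖z‖ ^ r) := by
        rw [mul_left_comm]
        gcongr
        exact hr ▸ hC _ (by linarith)
    _ = C / ε ^ 2 / ‖z‖ ^ r := by ring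

theorem stmt8 (α β δ : ℝ) (hα0 : 0 < α) (hα1 : α ≤ 1) (hβ : 0 < β) (hαβ : 1 < α + β)
    (r : ℝ) (hr : r = (α + β - 1) / β) (hr0 : 0 < r) (hr1 : r < 1) (hδ : 0 < δ)
    (K : ℂ → ℂ)
    (hK : ∀ z : ℂ, K z = ∑' k : ℕ,
      1 / (((((k : ℝ) + 1) ^ α : ℝ) : ℂ) * (z + ((((k : ℝ) + 1) ^ β : ℝ) : ℂ)))) :
    ∃ C : ℝ, ∀ z : ℂ, |z.arg| < Real.pi - δ → 2 ≤ ‖z‖ →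
      ‖z * deriv K z‖ ≤ C / ‖z‖ ^ r :=
  stmt8_general α β δ hα0 hβ hαβ r hr hr1 hδ K hK
end

section
/- Let β > 0, 0 < r ≤ 1, and ρ ≥ 2. Then ∫₁^∞ dx / (x^α (ρ² + x^{2β})) ≤ C · ρ^{-r-1} when r < 1, and ≤ C · log(ρ)/ρ² when r = 1, for a constant C depending only on α, β, where r = (α + β − 1)/β and 0 < α ≤ 1. -/
open Complex Real MeasureTheory Set Filter

/-!
Split the integral at `X = ρ ^ (1 / β)`, where `x ^ (2 * β)` overtakes `ρ ^ 2`. On `(1, X]` the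
integrand is at most `x ^ (-α) / ρ ^ 2`, whose integral is `O(X ^ (1 - α))` for `α < 1` and
`log X` for `α = 1`; on `(X, ∞)` it is at most `x ^ (-α - 2β)`, whose integral is
`O(X ^ (1 - α - 2β))`. Both pieces are `O(ρ ^ ((1 - α) / β - 2)) = O(ρ ^ (-r - 1))`, with an extra
logarithm when `α = 1`.
-/

section

variable {α β ρ x : ℝ}

lemma one_div_rpow_mul_add_le_rpow_neg (hx : 0 < x) :
    1 / (x ^ α * (ρ ^ 2 + x ^ (2 * β))) ≤ x ^ (-(α + 2 * β)) := by
  rw [rpow_neg hx.le, rpow_add hx, ← one_div]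
  gcongr
  exact le_add_of_nonneg_left (sq_nonneg ρ)

lemma one_div_rpow_mul_add_le_rpow_neg_div (hx : 0 < x) (hρ : ρ ≠ 0) :
    1 / (x ^ α * (ρ ^ 2 + x ^ (2 * β))) ≤ x ^ (-α) / ρ ^ 2 := by
  rw [rpow_neg hx.le, inv_eq_one_div, div_div]
  gcongr
  exact le_add_of_nonneg_right (rpow_nonneg hx.le _)

lemma integrableOn_Ioi_one_div_rpow_mul_add (hαβ : 1 < α + 2 * β) :
    IntegrableOn (fun x : ℝ ↦ 1 / (x ^ α * (ρ ^ 2 + x ^ (2 * β)))) (Ioi 1) := by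
  refine (integrableOn_Ioi_rpow_of_lt (by linarith : -(α + 2 * β) < -1) one_pos).mono'
    (by fun_prop : Measurable _).aestronglyMeasurable ?_
  filter_upwards [ae_restrict_mem measurableSet_Ioi] with x (hx : 1 < x)
  have hx0 : 0 < x := one_pos.trans hx
  rw [norm_of_nonneg (by positivity)]
  exact one_div_rpow_mul_add_le_rpow_neg hx0

lemma integral_Ioi_one_div_rpow_mul_add_le (hαβ : 1 < α + 2 * β) (hρ : ρ ≠ 0) {X : ℝ}
    (hX : 1 ≤ X) :
    ∫ x in Ioi 1, 1 / (x ^ α * (ρ ^ 2 + x ^ (2 * β))) ≤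
      (∫ x in Ioc 1 X, x ^ (-α)) / ρ ^ 2 + X ^ (1 - α - 2 * β) / (α + 2 * β - 1) := by
  have hint := integrableOn_Ioi_one_div_rpow_mul_add (ρ := ρ) hαβ
  have hX0 : 0 < X := one_pos.trans_le hX
  have hexp : -(α + 2 * β) < -1 := by linarith
  rw [← Ioc_union_Ioi_eq_Ioi hX, setIntegral_union (Ioc_disjoint_Ioi le_rfl) measurableSet_Ioi
    (hint.mono_set Ioc_subset_Ioi_self) (hint.mono_set (Ioi_subset_Ioi hX))]
  gcongr
  · rw [← integral_div]
    refine setIntegral_mono_on (hint.mono_set Ioc_subset_Ioi_self) ?_ measurableSet_Ioc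
      fun x hx ↦ one_div_rpow_mul_add_le_rpow_neg_div (one_pos.trans hx.1) hρ
    refine (ContinuousOn.integrableOn_Icc ?_).mono_set Ioc_subset_Icc_self
    exact (continuousOn_id.rpow_const fun x hx ↦ Or.inl (one_pos.trans_le hx.1).ne').div_const _
  calc ∫ x in Ioi X, 1 / (x ^ α * (ρ ^ 2 + x ^ (2 * β)))
        ≤ ∫ x in Ioi X, x ^ (-(α + 2 * β)) :=
          setIntegral_mono_on (hint.mono_set (Ioi_subset_Ioi hX))
            (integrableOn_Ioi_rpow_of_lt hexp hX0) measurableSet_Ioi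
            fun x hx ↦ one_div_rpow_mul_add_le_rpow_neg (hX0.trans hx)
      _ = X ^ (1 - α - 2 * β) / (α + 2 * β - 1) := by
          rw [integral_Ioi_rpow_of_lt hexp hX0, neg_div, ← div_neg]
          congr 2 <;> ring

lemma integral_Ioc_one_rpow_neg_le (hα : α < 1) {X : ℝ} (hX : 1 ≤ X) :
    ∫ x in Ioc 1 X, x ^ (-α) ≤ X ^ (1 - α) / (1 - α) := by
  rw [← intervalIntegral.integral_of_le hX, integral_rpow (Or.inl (by linarith)), one_rpow,
    show -α + 1 = 1 - α by ring]
  gcongr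
  linarith

lemma integral_Ioc_one_rpow_neg_one {X : ℝ} (hX : 1 ≤ X) :
    ∫ x in Ioc 1 X, x ^ (-1 : ℝ) = Real.log X := by
  simp_rw [← intervalIntegral.integral_of_le hX, rpow_neg_one]
  rw [integral_inv_of_pos one_pos (one_pos.trans_le hX), div_one]

lemma rpow_one_div_rpow (hρ : 0 ≤ ρ) (c : ℝ) : (ρ ^ (1 / β)) ^ c = ρ ^ (c / β) := by
  rw [← rpow_mul hρ, one_div_mul_eq_div]

lemma integral_Ioi_one_div_rpow_mul_add_le_of_lt_one (hα : α < 1) (hβ : 0 < β)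
    (hαβ : 1 < α + 2 * β) (hρ : 1 ≤ ρ) :
    ∫ x in Ioi 1, 1 / (x ^ α * (ρ ^ 2 + x ^ (2 * β))) ≤
      (1 / (1 - α) + 1 / (α + 2 * β - 1)) * ρ ^ ((1 - α) / β - 2) := by
  have hρ0 : 0 < ρ := one_pos.trans_le hρ
  have hX : 1 ≤ ρ ^ (1 / β) := one_le_rpow hρ (by positivity)
  have hlow : ρ ^ ((1 - α) / β) / ρ ^ 2 = ρ ^ ((1 - α) / β - 2) := by
    rw [rpow_sub hρ0, rpow_two]
  have hhigh : ρ ^ ((1 - α - 2 * β) / β) = ρ ^ ((1 - α) / β - 2) := by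
    congr 1; field_simp
  calc _ ≤ (∫ x in Ioc 1 (ρ ^ (1 / β)), x ^ (-α)) / ρ ^ 2
          + (ρ ^ (1 / β)) ^ (1 - α - 2 * β) / (α + 2 * β - 1) :=
        integral_Ioi_one_div_rpow_mul_add_le hαβ hρ0.ne' hX
    _ ≤ (ρ ^ (1 / β)) ^ (1 - α) / (1 - α) / ρ ^ 2
          + (ρ ^ (1 / β)) ^ (1 - α - 2 * β) / (α + 2 * β - 1) := by
        gcongr
        exact integral_Ioc_one_rpow_neg_le hα hX
    _ = _ := by
        rw [rpow_one_div_rpow hρ0.le, rpow_one_div_rpow hρ0.le, hhigh, div_right_comm, hlow]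
        ring

lemma integral_Ioi_one_div_rpow_one_mul_add_le (hβ : 0 < β) (hρ : 1 ≤ ρ) :
    ∫ x in Ioi 1, 1 / (x ^ (1 : ℝ) * (ρ ^ 2 + x ^ (2 * β))) ≤
      (Real.log ρ / β + 1 / (2 * β)) / ρ ^ 2 := by
  have hρ0 : 0 < ρ := one_pos.trans_le hρ
  have hX : 1 ≤ ρ ^ (1 / β) := one_le_rpow hρ (by positivity)
  have htail : (ρ ^ (1 / β)) ^ (1 - 1 - 2 * β) = 1 / ρ ^ 2 := by
    rw [rpow_one_div_rpow hρ0.le, show (1 - 1 - 2 * β) / β = -2 by field_simp; ring,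
      rpow_neg hρ0.le, rpow_two, one_div]
  calc _ ≤ (∫ x in Ioc 1 (ρ ^ (1 / β)), x ^ (-1 : ℝ)) / ρ ^ 2
          + (ρ ^ (1 / β)) ^ (1 - 1 - 2 * β) / (1 + 2 * β - 1) :=
        integral_Ioi_one_div_rpow_mul_add_le (by linarith) hρ0.ne' hX
    _ = _ := by
        rw [integral_Ioc_one_rpow_neg_one hX, log_rpow hρ0, htail]
        ring

end

theorem stmt10_general (α β : ℝ) (hα1 : α ≤ 1) (hβ : 0 < β)
    (r : ℝ) (hr : r = (α + β - 1) / β) (hr0 : 0 < r) :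
    ∃ C : ℝ, ∀ ρ : ℝ, 2 ≤ ρ →
      ((r < 1 → ∫ x in Set.Ioi (1 : ℝ), 1 / (x ^ α * (ρ ^ 2 + x ^ (2 * β))) ≤ C * ρ ^ (-r - 1)) ∧
       (r = 1 → ∫ x in Set.Ioi (1 : ℝ), 1 / (x ^ α * (ρ ^ 2 + x ^ (2 * β))) ≤ C * Real.log ρ / ρ ^ 2)) := by
  have hαβ : 1 < α + β := by
    rw [hr] at hr0
    linarith [(div_pos_iff_of_pos_right hβ).mp hr0]
  rcases hα1.lt_or_eq with hα | rfl
  · have hr1 : r < 1 := by rw [hr, div_lt_one hβ]; linarith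
    have hexp : (1 - α) / β - 2 = -r - 1 := by rw [hr]; field_simp; ring
    refine ⟨1 / (1 - α) + 1 / (α + 2 * β - 1), fun ρ hρ ↦ ⟨fun _ ↦ ?_, fun h ↦ absurd h hr1.ne⟩⟩
    rw [← hexp]
    exact integral_Ioi_one_div_rpow_mul_add_le_of_lt_one hα hβ (by linarith) (by linarith)
  · have hr1 : r = 1 := by rw [hr]; field_simp; ring
    refine ⟨1 / β + 1 / (2 * β * Real.log 2), fun ρ hρ ↦ ⟨fun h ↦ absurd hr1 h.ne, fun _ ↦ ?_⟩⟩
    have hlog : Real.log 2 ≤ Real.log ρ := log_le_log two_pos hρ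
    have hlog2 : 0 < Real.log 2 := log_pos one_lt_two
    refine (integral_Ioi_one_div_rpow_one_mul_add_le hβ (by linarith)).trans ?_
    have hhalf : 1 / (2 * β) ≤ Real.log ρ / (2 * β * Real.log 2) := by
      rw [div_le_div_iff₀ (by positivity) (by positivity)]
      nlinarith
    calc _ ≤ (Real.log ρ / β + Real.log ρ / (2 * β * Real.log 2)) / ρ ^ 2 := by gcongr
      _ = _ := by ring

theorem stmt10 (α β : ℝ) (hα0 : 0 < α) (hα1 : α ≤ 1) (hβ : 0 < β)
    (r : ℝ) (hr : r = (α + β - 1) / β) (hr0 : 0 < r) (hr1 : r ≤ 1) :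
    ∃ C : ℝ, ∀ ρ : ℝ, 2 ≤ ρ →
      ((r < 1 → ∫ x in Set.Ioi (1 : ℝ), 1 / (x ^ α * (ρ ^ 2 + x ^ (2 * β))) ≤ C * ρ ^ (-r - 1)) ∧
       (r = 1 → ∫ x in Set.Ioi (1 : ℝ), 1 / (x ^ α * (ρ ^ 2 + x ^ (2 * β))) ≤ C * Real.log ρ / ρ ^ 2)) :=
  stmt10_general α β hα1 hβ r hr hr0
end
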